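/- Let η ∈ (0,1], c > 1, and g_C the Gaussian kernel of variance C. Suppose a kernel H satisfies |H(s,t,x,y)| ≤ C₀ (t−s)^{-(1-η/2)} g_{c(t-s)}(y−x) for all 0 ≤ s < t ≤ T, and p̃ satisfies |p̃(s,t,x,y)| ≤ C₀ g_{c(t-s)}(y−x). Define the space-time convolution (f ⊗ H)(s,t,x,y) = ∫_s^t ∫_ℝ f(s,u,x,z) H(u,t,z,y) dz du and iterates H^{(0)} = Id, p̃ ⊗ H^{(r)} = (p̃ ⊗ H^{(r-1)}) ⊗ H. Then for all r ≥ 0: |p̃ ⊗ H^{(r)}(s,t,x,y)| ≤ C₀^{r+1} (t−s)^{rη/2} ∏_{i=1}^{r} B(1 + (i−1)η/2, η/2) · g_{c(t−s)}(y−x). -/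

import Mathlib

open MeasureTheory Real Filter

/-- The centered Gaussian density with variance `C`. -/
noncomputable def gK (C z : ℝ) : ℝ :=
  (2 * Real.pi * C) ^ (-(1:ℝ)/2) * Real.exp (-(z^2) / (2 * C))

/-- The Euler Beta function as an integral. -/
noncomputable def Bfn (m n : ℝ) : ℝ :=
  ∫ v in (0:ℝ)..1, (1 - v) ^ (m - 1) * v ^ (n - 1)

/-- Iterated space-time convolution `p ⊗ H^{(r)}`. -/
noncomputable def iterConv (p H : ℝ → ℝ → ℝ → ℝ → ℝ) : ℕ → ℝ → ℝ → ℝ → ℝ → ℝ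
  | 0 => p
  | r + 1 => fun s t x y => ∫ u in s..t, ∫ z : ℝ, iterConv p H r s u x z * H u t z y

lemma gK_nonneg {C : ℝ} (hC : 0 ≤ C) (z : ℝ) : 0 ≤ gK C z := by
  unfold gK
  have : (0:ℝ) ≤ 2 * Real.pi * C := by positivity
  positivity

lemma gK_eq {C : ℝ} (hC : 0 < C) (z : ℝ) :
    gK C z = (2 * Real.pi * C) ^ (-(1:ℝ)/2) * Real.exp (-(2*C)⁻¹ * z ^ 2) := by
  unfold gK
  congr 2
  field_simp

lemma integrable_gK {C : ℝ} (hC : 0 < C) (m : ℝ) :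
    Integrable (fun z => gK C (z - m)) := by
  have h1 : Integrable (fun z : ℝ => Real.exp (-(2*C)⁻¹ * z ^ 2)) :=
    integrable_exp_neg_mul_sq (by positivity)
  have h2 := (h1.comp_sub_right m).const_mul ((2 * Real.pi * C) ^ (-(1:ℝ)/2))
  exact h2.congr (Eventually.of_forall fun z => (gK_eq hC _).symm)

lemma integral_gK {C : ℝ} (hC : 0 < C) (m : ℝ) :
    ∫ z, gK C (z - m) = 1 := by
  have : ∀ z : ℝ, gK C (z - m) =
      (2 * Real.pi * C) ^ (-(1:ℝ)/2) * Real.exp (-(2*C)⁻¹ * (z-m) ^ 2) :=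
    fun z => gK_eq hC _
  simp_rw [this]
  rw [integral_const_mul]
  rw [integral_sub_right_eq_self (fun z => Real.exp (-(2*C)⁻¹ * z ^ 2)) m]
  rw [integral_gaussian]
  have h2C : (0:ℝ) < 2 * Real.pi * C := by positivity
  rw [show ((-1:ℝ)/2) = -(1/2) by norm_num, Real.rpow_neg (le_of_lt h2C),
    ← Real.sqrt_eq_rpow]
  rw [show Real.pi / (2*C)⁻¹ = 2 * Real.pi * C by field_simp]
  rw [inv_mul_cancel₀ (by positivity)]

lemma gK_mul {A B : ℝ} (hA : 0 < A) (hB : 0 < B) (x y z : ℝ) :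
    gK A (z - x) * gK B (y - z) =
      gK (A + B) (y - x) * gK (A * B / (A + B)) (z - (B * x + A * y) / (A + B)) := by
  have hAB : 0 < A + B := by linarith
  unfold gK
  rw [mul_mul_mul_comm, mul_mul_mul_comm ((2 * Real.pi * (A+B)) ^ (-(1:ℝ)/2)),
    ← Real.mul_rpow (by positivity) (by positivity),
    ← Real.mul_rpow (by positivity) (by positivity),
    ← Real.exp_add, ← Real.exp_add]
  congr 2
  · field_simp
  · field_simp
    ring

lemma integrable_gK_mul {A B : ℝ} (hA : 0 < A) (hB : 0 < B) (x y : ℝ) :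
    Integrable (fun z => gK A (z - x) * gK B (y - z)) := by
  have hAB : 0 < A + B := by linarith
  have h := ((integrable_gK (C := A * B / (A + B)) (by positivity)
      ((B * x + A * y) / (A + B))).const_mul (gK (A + B) (y - x)))
  exact h.congr (Eventually.of_forall fun z => (gK_mul hA hB x y z).symm)

lemma chapman {A B : ℝ} (hA : 0 < A) (hB : 0 < B) (x y : ℝ) :
    ∫ z, gK A (z - x) * gK B (y - z) = gK (A + B) (y - x) := by
  have hAB : 0 < A + B := by linarith
  simp_rw [gK_mul hA hB x y]
  rw [integral_const_mul, integral_gK (by positivity), mul_one]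

lemma Bfn_nonneg (m n : ℝ) : 0 ≤ Bfn m n := by
  apply intervalIntegral.integral_nonneg (by norm_num)
  intro v hv
  have h1 : (0:ℝ) ≤ 1 - v := by linarith [hv.2]
  have h2 : (0:ℝ) ≤ v := hv.1
  positivity

lemma beta_intervalIntegrable {a b s t : ℝ} (ha : 0 ≤ a) (hb : -1 < b) (hst : s < t) :
    IntervalIntegrable (fun u => (u - s) ^ a * (t - u) ^ b) volume s t := by
  have hg : IntervalIntegrable (fun u => (t - s) ^ a * (t - u) ^ b) volume s t := by
    apply IntervalIntegrable.const_mul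
    have h := (intervalIntegral.intervalIntegrable_rpow' (a := t - t) (b := t - s) hb)
    have := (h.comp_sub_left t).symm
    simpa using this
  apply hg.mono_fun
  · apply Measurable.aestronglyMeasurable
    fun_prop
  · filter_upwards [ae_restrict_mem measurableSet_uIoc] with u hu
    rw [Set.uIoc_of_le hst.le] at hu
    have h1 : 0 ≤ u - s := by linarith [hu.1]
    have h2 : 0 ≤ t - u := by linarith [hu.2]
    rw [Real.norm_eq_abs, Real.norm_eq_abs,
      abs_of_nonneg (mul_nonneg (Real.rpow_nonneg h1 a) (Real.rpow_nonneg h2 b)),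
      abs_of_nonneg (mul_nonneg (Real.rpow_nonneg (by linarith) a) (Real.rpow_nonneg h2 b))]
    exact mul_le_mul_of_nonneg_right
      (Real.rpow_le_rpow h1 (by linarith [hu.2]) ha) (Real.rpow_nonneg h2 b)

lemma beta_integral {a b s t : ℝ} (ha : 0 ≤ a) (hb : -1 < b) (hst : s < t) :
    ∫ u in s..t, (u - s) ^ a * (t - u) ^ b =
      (t - s) ^ (a + b + 1) * Bfn (a + 1) (b + 1) := by
  set f : ℝ → ℝ := fun u => (u - s) ^ a * (t - u) ^ b with hf
  have hd : (0:ℝ) < t - s := by linarith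
  have e1 : (∫ u in s..t, f u) = ∫ w in (0:ℝ)..(t - s), f (t - w) := by
    rw [intervalIntegral.integral_comp_sub_left f t]
    norm_num
  have e2 : (∫ w in (0:ℝ)..(t - s), f (t - w)) =
      (t - s) • ∫ v in (0:ℝ)..1, f (t - (t - s) * v) := by
    rw [intervalIntegral.integral_comp_mul_left (fun w => f (t - w)) hd.ne']
    rw [mul_zero, mul_one, smul_smul, mul_inv_cancel₀ hd.ne', one_smul]
  have e3 : (∫ v in (0:ℝ)..1, f (t - (t - s) * v)) =
      ∫ v in (0:ℝ)..1, (t - s) ^ a * (t - s) ^ b * ((1 - v) ^ a * v ^ b) := by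
    apply intervalIntegral.integral_congr
    intro v hv
    rw [Set.uIcc_of_le (by norm_num)] at hv
    have h1 : (0:ℝ) ≤ 1 - v := by linarith [hv.2]
    have h2 : (0:ℝ) ≤ v := hv.1
    simp only [hf]
    rw [show t - (t - s) * v - s = (t - s) * (1 - v) by ring,
      show t - (t - (t - s) * v) = (t - s) * v by ring,
      Real.mul_rpow hd.le h1, Real.mul_rpow hd.le h2]
    ring
  rw [e1, e2, e3, intervalIntegral.integral_const_mul]
  have : Bfn (a + 1) (b + 1) = ∫ v in (0:ℝ)..1, (1 - v) ^ a * v ^ b := by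
    unfold Bfn; norm_num
  rw [← this, smul_eq_mul]
  rw [show a + b + 1 = 1 + (a + b) by ring, Real.rpow_add hd,
    Real.rpow_one, Real.rpow_add hd]
  ring

theorem parametrix_smoothing (T η c C₀ : ℝ) (hT : 0 < T) (hη : η ∈ Set.Ioc (0:ℝ) 1)
    (hc : 1 < c) (hC : 0 < C₀) (H ptil : ℝ → ℝ → ℝ → ℝ → ℝ)
    (hH : ∀ s t x y : ℝ, 0 ≤ s → s < t → t ≤ T →
      |H s t x y| ≤ C₀ * (t - s) ^ (-(1 - η / 2)) * gK (c * (t - s)) (y - x))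
    (hp : ∀ s t x y : ℝ, 0 ≤ s → s < t → t ≤ T →
      |ptil s t x y| ≤ C₀ * gK (c * (t - s)) (y - x)) :
    ∀ r : ℕ, ∀ s t x y : ℝ, 0 ≤ s → s < t → t ≤ T →
      |iterConv ptil H r s t x y| ≤
        C₀ ^ (r + 1) * (t - s) ^ ((r:ℝ) * η / 2) *
          (∏ i ∈ Finset.range r, Bfn (1 + (i:ℝ) * η / 2) (η / 2)) *
          gK (c * (t - s)) (y - x) := by
  obtain ⟨hη0, hη1⟩ := hη
  have hc0 : (0:ℝ) < c := by linarith
  intro r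
  induction r with
  | zero =>
    intro s t x y hs hst htT
    simp only [iterConv, zero_add, pow_one, Nat.cast_zero, zero_mul, zero_div,
      Real.rpow_zero, Finset.range_zero, Finset.prod_empty, mul_one, one_mul]
    exact hp s t x y hs hst htT
  | succ r ih =>
    intro s t x y hs hst htT
    have hra : (0:ℝ) ≤ (r:ℝ) * η / 2 :=
      div_nonneg (mul_nonneg (Nat.cast_nonneg r) hη0.le) (by norm_num)
    set Pr : ℝ := ∏ i ∈ Finset.range r, Bfn (1 + (i:ℝ) * η / 2) (η / 2) with hPr
    have hPr0 : 0 ≤ Pr := Finset.prod_nonneg fun i _ => Bfn_nonneg _ _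
    have hgts : 0 ≤ gK (c * (t - s)) (y - x) := gK_nonneg (by nlinarith) _
    -- inner bound
    have inner_bound : ∀ u : ℝ, s < u → u < t →
        |∫ z : ℝ, iterConv ptil H r s u x z * H u t z y| ≤
          (C₀ ^ (r + 2) * Pr * gK (c * (t - s)) (y - x)) *
            ((u - s) ^ ((r:ℝ) * η / 2) * (t - u) ^ (η / 2 - 1)) := by
      intro u hsu hut
      have hA : (0:ℝ) < c * (u - s) := by nlinarith
      have hB : (0:ℝ) < c * (t - u) := by nlinarith
      set c1 : ℝ := (C₀ ^ (r + 1) * (u - s) ^ ((r:ℝ) * η / 2) * Pr) *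
        (C₀ * (t - u) ^ (-(1 - η / 2))) with hc1
      have key : |∫ z : ℝ, iterConv ptil H r s u x z * H u t z y| ≤
          ∫ z : ℝ, c1 * (gK (c * (u - s)) (z - x) * gK (c * (t - u)) (y - z)) := by
        rw [← Real.norm_eq_abs]
        apply norm_integral_le_of_norm_le ((integrable_gK_mul hA hB x y).const_mul c1)
        filter_upwards with z
        rw [Real.norm_eq_abs, abs_mul]
        calc |iterConv ptil H r s u x z| * |H u t z y|
            ≤ (C₀ ^ (r + 1) * (u - s) ^ ((r:ℝ) * η / 2) * Pr * gK (c * (u - s)) (z - x)) *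
              (C₀ * (t - u) ^ (-(1 - η / 2)) * gK (c * (t - u)) (y - z)) := by
              apply mul_le_mul (ih s u x z hs hsu (by linarith))
                (hH u t z y (by linarith) hut htT) (abs_nonneg _)
              have h1 : (0:ℝ) ≤ (u - s) ^ ((r:ℝ) * η / 2) := Real.rpow_nonneg (by linarith) _
              have h2 := gK_nonneg hA.le (z - x)
              have h3 : (0:ℝ) ≤ C₀ ^ (r + 1) := by positivity
              exact mul_nonneg (mul_nonneg (mul_nonneg h3 h1) hPr0) h2
          _ = c1 * (gK (c * (u - s)) (z - x) * gK (c * (t - u)) (y - z)) := by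
              rw [hc1]; ring
      rw [integral_const_mul, chapman hA hB x y,
        show c * (u - s) + c * (t - u) = c * (t - s) by ring] at key
      refine key.trans (le_of_eq ?_)
      rw [hc1, show -(1 - η / 2) = η / 2 - 1 by ring]
      ring
    -- outer bound
    have hae : ∀ᵐ u : ℝ, u ≠ t := by
      rw [Filter.eventually_iff, mem_ae_iff]
      convert Real.volume_singleton (a := t) using 2
      ext u; simp
    have houter : |iterConv ptil H (r + 1) s t x y| ≤
        |∫ u in s..t, (C₀ ^ (r + 2) * Pr * gK (c * (t - s)) (y - x)) *
          ((u - s) ^ ((r:ℝ) * η / 2) * (t - u) ^ (η / 2 - 1))| := by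
      show |∫ u in s..t, ∫ z : ℝ, iterConv ptil H r s u x z * H u t z y| ≤ _
      rw [← Real.norm_eq_abs]
      apply intervalIntegral.norm_integral_le_abs_of_norm_le
      · filter_upwards [ae_restrict_mem measurableSet_uIoc, ae_restrict_of_ae hae]
          with u hu hut
        rw [Set.uIoc_of_le hst.le] at hu
        rw [Real.norm_eq_abs]
        exact inner_bound u hu.1 (lt_of_le_of_ne hu.2 hut)
      · exact (beta_intervalIntegrable hra (by linarith) hst).const_mul _
    have hval : (∫ u in s..t, (C₀ ^ (r + 2) * Pr * gK (c * (t - s)) (y - x)) *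
          ((u - s) ^ ((r:ℝ) * η / 2) * (t - u) ^ (η / 2 - 1))) =
        (C₀ ^ (r + 2) * Pr * gK (c * (t - s)) (y - x)) *
          ((t - s) ^ ((r:ℝ) * η / 2 + (η / 2 - 1) + 1) *
            Bfn ((r:ℝ) * η / 2 + 1) (η / 2 - 1 + 1)) := by
      rw [intervalIntegral.integral_const_mul,
        beta_integral hra (by linarith) hst, mul_assoc]
    rw [hval] at houter
    refine houter.trans (le_of_eq ?_)
    have h1 : (0:ℝ) ≤ (t - s) ^ ((r:ℝ) * η / 2 + (η / 2 - 1) + 1) :=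
      Real.rpow_nonneg (by linarith) _
    have h2 : 0 ≤ Bfn ((r:ℝ) * η / 2 + 1) (η / 2 - 1 + 1) := Bfn_nonneg _ _
    have h3 : (0:ℝ) ≤ C₀ ^ (r + 2) := by positivity
    rw [abs_of_nonneg (mul_nonneg (mul_nonneg (mul_nonneg h3 hPr0) hgts)
      (mul_nonneg h1 h2))]
    rw [Finset.prod_range_succ, ← hPr,
      show (r:ℝ) * η / 2 + (η / 2 - 1) + 1 = ((r:ℕ) + 1 : ℝ) * η / 2 by push_cast; ring,
      show (r:ℝ) * η / 2 + 1 = 1 + (r:ℝ) * η / 2 by ring,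
      show η / 2 - 1 + 1 = η / 2 by ring]
    push_cast
    ring
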